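/- arXiv:0912.1373 — 6 statements merged into one kernel-verified Lean document; each statement's English description precedes it below -/
import Mathlib

section
/- With D_r and D^r as defined, for every n ≥ 0 and smooth f on (0,∞): D_r(n){f'} - (D^r(n){f})' = (2n/r) · D^r(n){f}. -/
/-- `Dr n f = ((1/r) d/dr)^n f`, the `n`-fold composition of `f ↦ (1/r) f'`. -/
noncomputable def Dr : ℕ → (ℝ → ℝ) → (ℝ → ℝ)
  | 0, f => f
  | n + 1, f => fun r => (1 / r) * deriv (Dr n f) r

/-- `Dsup n`, i.e. `D^r(n)`: `D^r(0){f} = f`, `D^r(n){f} = d/dr (D^r(n-1){f} / r)`. -/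
noncomputable def Dsup : ℕ → (ℝ → ℝ) → (ℝ → ℝ)
  | 0, f => f
  | n + 1, f => fun r => deriv (fun s => Dsup n f s / s) r

open Set

private lemma contDiffOn_Dsup (f : ℝ → ℝ) (hf : ContDiffOn ℝ (⊤ : ℕ∞) f (Ioi 0)) :
    ∀ n, ContDiffOn ℝ (⊤ : ℕ∞) (Dsup n f) (Ioi 0) := by
  intro n
  induction n with
  | zero => exact hf
  | succ n ih =>
    have h1 : ContDiffOn ℝ (⊤ : ℕ∞) (fun s => Dsup n f s / s) (Ioi 0) :=
      ih.div contDiffOn_id (fun x hx => ne_of_gt hx)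
    exact h1.deriv_of_isOpen isOpen_Ioi (by simp)

private lemma diffAt_of_contDiffOn {g : ℝ → ℝ} (hg : ContDiffOn ℝ (⊤ : ℕ∞) g (Ioi 0))
    {r : ℝ} (hr : r ∈ Ioi 0) : DifferentiableAt ℝ g r :=
  (hg.differentiableOn (by simp)).differentiableAt (isOpen_Ioi.mem_nhds hr)

/-- for all `n ≥ 0` and smooth `f` on `(0,∞)`:
`D_r(n){f'} - (D^r(n){f})' = (2n/r) · D^r(n){f}`. -/
theorem Dr_deriv_sub_deriv_Dsup (f : ℝ → ℝ)
    (hf : ContDiffOn ℝ (⊤ : ℕ∞) f (Set.Ioi 0)) (n : ℕ) :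
    ∀ r ∈ Set.Ioi (0 : ℝ),
      Dr n (deriv f) r - deriv (Dsup n f) r = (2 * n / r) * Dsup n f r := by
  induction n with
  | zero => intro r hr; simp [Dr, Dsup]
  | succ n ih =>
    intro r hr
    have hr0 : (0:ℝ) < r := hr
    set B := Dsup n f with hBdef
    have hB : ContDiffOn ℝ (⊤ : ℕ∞) B (Ioi 0) := contDiffOn_Dsup f hf n
    have hB1 : ContDiffOn ℝ (⊤ : ℕ∞) (deriv B) (Ioi 0) := hB.deriv_of_isOpen isOpen_Ioi (by simp)
    -- D^{n+1} = B1/s - B/s^2 on Ioi 0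
    have key : Set.EqOn (Dsup (n+1) f)
        (fun s => deriv B s / s - B s / s^2) (Ioi 0) := by
      intro s hs
      have hs0 : (0:ℝ) < s := hs
      show deriv (fun t => B t / t) s = _
      rw [deriv_fun_div (diffAt_of_contDiffOn hB hs) differentiableAt_fun_id (ne_of_gt hs0)]
      simp only [deriv_id'', id]
      field_simp
    -- Dr n (deriv f) = B1 + (2n/s) B on Ioi 0
    have keyA : Set.EqOn (Dr n (deriv f))
        (fun s => deriv B s + (2 * n / s) * B s) (Ioi 0) := by
      intro s hs
      have := ih s hs
      simp only [← hBdef] at this ⊢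
      linarith
    have hmem : Ioi (0:ℝ) ∈ nhds r := isOpen_Ioi.mem_nhds hr
    -- rewrite deriv (Dsup (n+1) f) r
    have e1 : deriv (Dsup (n+1) f) r
        = deriv (fun s => deriv B s / s - B s / s^2) r :=
      (Filter.eventuallyEq_of_mem hmem key).deriv_eq
    have dB : DifferentiableAt ℝ B r := diffAt_of_contDiffOn hB hr
    have dB1 : DifferentiableAt ℝ (deriv B) r := diffAt_of_contDiffOn hB1 hr
    have dq1 : DifferentiableAt ℝ (fun s => deriv B s / s) r :=
      dB1.div differentiableAt_fun_id (ne_of_gt hr0)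
    have dq2 : DifferentiableAt ℝ (fun s => B s / s^2) r :=
      dB.div (differentiableAt_pow 2) (by positivity)
    have e2 : deriv (fun s => deriv B s / s - B s / s^2) r
        = (deriv (deriv B) r * r - deriv B r) / r^2
          - (deriv B r * r^2 - B r * (2*r)) / (r^2)^2 := by
      rw [deriv_fun_sub dq1 dq2,
        deriv_fun_div dB1 differentiableAt_fun_id (ne_of_gt hr0),
        deriv_fun_div dB (differentiableAt_pow 2) (by positivity)]
      simp [deriv_pow]
    -- rewrite deriv (Dr n (deriv f)) r
    have e3 : deriv (Dr n (deriv f)) r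
        = deriv (fun s => deriv B s + (2 * n / s) * B s) r :=
      (Filter.eventuallyEq_of_mem hmem keyA).deriv_eq
    have dq3 : DifferentiableAt ℝ (fun s : ℝ => 2 * n / s) r :=
      (differentiableAt_const _).div differentiableAt_fun_id (ne_of_gt hr0)
    have e4 : deriv (fun s => deriv B s + (2 * n / s) * B s) r
        = deriv (deriv B) r + ((0 * r - 2 * n * 1) / r^2 * B r + (2 * n / r) * deriv B r) := by
      rw [deriv_fun_add dB1 (dq3.fun_mul dB), deriv_fun_mul dq3 dB,
        deriv_fun_div (differentiableAt_const _) differentiableAt_fun_id (ne_of_gt hr0)]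
      simp
    -- put everything together
    have hDsup : Dsup (n+1) f r = deriv B r / r - B r / r^2 := key hr
    have hDr : Dr (n+1) (deriv f) r = (1 / r) * deriv (Dr n (deriv f)) r := rfl
    rw [hDr, e3, e4, e1, e2, hDsup]
    have hrne : r ≠ 0 := ne_of_gt hr0
    push_cast
    field_simp
    ring
end

section
/- The operator D^r satisfies the mixed Leibniz-type formula: for smooth functions f, g on (0,∞) and all n ≥ 0, D^r(n){f·g} = Σ_{ν=0}^n C(n,ν) · D_r(n-ν){f} · D^r(ν){g}. -/
lemma inv_smooth : ContDiffOn ℝ (⊤ : ℕ∞) (fun r : ℝ => 1 / r) (Set.Ioi 0) := by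
  apply ContDiffOn.div contDiffOn_const contDiffOn_id
  intro x hx; exact ne_of_gt hx

lemma Dr_smooth {f : ℝ → ℝ} (hf : ContDiffOn ℝ (⊤ : ℕ∞) f (Set.Ioi 0)) (n : ℕ) :
    ContDiffOn ℝ (⊤ : ℕ∞) (Dr n f) (Set.Ioi 0) := by
  induction n with
  | zero => exact hf
  | succ n ih =>
    exact inv_smooth.mul (ih.deriv_of_isOpen isOpen_Ioi (by simp))

lemma Dsup_smooth {g : ℝ → ℝ} (hg : ContDiffOn ℝ (⊤ : ℕ∞) g (Set.Ioi 0)) (n : ℕ) :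
    ContDiffOn ℝ (⊤ : ℕ∞) (Dsup n g) (Set.Ioi 0) := by
  induction n with
  | zero => exact hg
  | succ n ih =>
    have : ContDiffOn ℝ (⊤ : ℕ∞) (fun s => Dsup n g s / s) (Set.Ioi 0) :=
      ih.div contDiffOn_id (fun x hx => ne_of_gt hx)
    exact this.deriv_of_isOpen isOpen_Ioi (by simp)

lemma diffAt_of_smooth {h : ℝ → ℝ} (hh : ContDiffOn ℝ (⊤ : ℕ∞) h (Set.Ioi 0)) {r : ℝ} (hr : r ∈ Set.Ioi (0:ℝ)) :
    DifferentiableAt ℝ h r :=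
  (hh.differentiableOn (by simp)).differentiableAt (isOpen_Ioi.mem_nhds hr)

lemma pascal (P Q : ℕ → ℝ) (n : ℕ) :
    (∑ ν ∈ Finset.range (n+1), (n.choose ν : ℝ) * (P (n+1-ν) * Q ν))
  + (∑ ν ∈ Finset.range (n+1), (n.choose ν : ℝ) * (P (n-ν) * Q (ν+1)))
  = ∑ ν ∈ Finset.range (n+2), ((n+1).choose ν : ℝ) * (P (n+1-ν) * Q ν) := by
  rw [Finset.sum_range_succ' (fun ν => ((n+1).choose ν : ℝ) * (P (n+1-ν) * Q ν)) (n+1),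
      Finset.sum_range_succ' (fun ν => ((n).choose ν : ℝ) * (P (n+1-ν) * Q ν)) n]
  have h1 : ∀ i ∈ Finset.range (n+1), ((n+1).choose (i+1) : ℝ) * (P (n+1-(i+1)) * Q (i+1))
      = (n.choose i : ℝ) * (P (n-i) * Q (i+1)) + (n.choose (i+1) : ℝ) * (P (n-i) * Q (i+1)) := by
    intro i hi
    rw [Nat.choose_succ_succ]
    push_cast [Nat.succ_eq_add_one]
    ring
  rw [Finset.sum_congr rfl h1, Finset.sum_add_distrib]
  have h2 : ∑ i ∈ Finset.range n, ((n).choose (i+1) : ℝ) * (P (n+1-(i+1)) * Q (i+1))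
      = ∑ i ∈ Finset.range (n+1), ((n).choose (i+1) : ℝ) * (P (n-i) * Q (i+1)) := by
    rw [Finset.sum_range_succ, Nat.choose_succ_self]
    simp only [Nat.cast_zero, zero_mul, add_zero]
    apply Finset.sum_congr rfl
    intro i hi
    have : n + 1 - (i+1) = n - i := by omega
    rw [this]
  rw [h2]
  simp [Nat.choose_zero_right]
  ring

/-- mixed Leibniz-type formula:
`D^r(n){f·g} = ∑_{ν=0}^n C(n,ν) D_r(n-ν){f} · D^r(ν){g}`. -/
theorem Dsup_leibniz (f g : ℝ → ℝ)
    (hf : ContDiffOn ℝ (⊤ : ℕ∞) f (Set.Ioi 0)) (hg : ContDiffOn ℝ (⊤ : ℕ∞) g (Set.Ioi 0)) (n : ℕ) :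
    ∀ r ∈ Set.Ioi (0 : ℝ),
      Dsup n (fun s => f s * g s) r =
        ∑ ν ∈ Finset.range (n + 1), (n.choose ν : ℝ) * (Dr (n - ν) f r * Dsup ν g r) := by
  induction n with
  | zero => intro r hr; simp [Dsup, Dr]
  | succ n ih =>
    intro r hr
    have hnhds : Set.Ioi (0:ℝ) ∈ nhds r := isOpen_Ioi.mem_nhds hr
    have hdf : ∀ m, DifferentiableAt ℝ (Dr m f) r := fun m =>
      diffAt_of_smooth (Dr_smooth hf m) hr
    have hdg : ∀ ν, DifferentiableAt ℝ (fun s => Dsup ν g s / s) r := fun ν =>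
      diffAt_of_smooth ((Dsup_smooth hg ν).div contDiffOn_id (fun x hx => ne_of_gt hx)) hr
    have heq : (fun s => Dsup n (fun s => f s * g s) s / s) =ᶠ[nhds r]
        (fun s => ∑ ν ∈ Finset.range (n + 1),
          (n.choose ν : ℝ) * (Dr (n - ν) f s * (Dsup ν g s / s))) := by
      filter_upwards [hnhds] with s hs
      rw [ih s hs, Finset.sum_div]
      exact Finset.sum_congr rfl fun ν _ => by rw [mul_div_assoc, mul_div_assoc]
    have hstep : Dsup (n+1) (fun s => f s * g s) r
        = deriv (fun s => Dsup n (fun s => f s * g s) s / s) r := rfl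
    rw [hstep, heq.deriv_eq, deriv_fun_sum
      (fun ν _ => (((hdf (n-ν)).fun_mul (hdg ν)).const_mul _))]
    have hterm : ∀ ν ∈ Finset.range (n+1),
        deriv (fun s => (n.choose ν : ℝ) * (Dr (n - ν) f s * (Dsup ν g s / s))) r
        = (n.choose ν : ℝ) * (Dr (n+1-ν) f r * Dsup ν g r)
          + (n.choose ν : ℝ) * (Dr (n-ν) f r * Dsup (ν+1) g r) := by
      intro ν hν
      rw [deriv_const_mul _ ((hdf (n-ν)).fun_mul (hdg ν)), deriv_fun_mul (hdf (n-ν)) (hdg ν)]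
      have hs : Dsup (ν+1) g r = deriv (fun s => Dsup ν g s / s) r := rfl
      have hDr : Dr (n-ν+1) f r = (1/r) * deriv (Dr (n-ν) f) r := rfl
      have hnn : n + 1 - ν = n - ν + 1 := by
        have := Finset.mem_range.mp hν; omega
      rw [hnn, hDr, ← hs]
      ring
    rw [Finset.sum_congr rfl hterm, Finset.sum_add_distrib,
      pascal (fun m => Dr m f r) (fun ν => Dsup ν g r) n]
end

section
/- For every n ≥ 0 and fixed x_0 ∈ R, D^r(n){ r/(x_0² + r²) } = (-1)^n 2^n n! r / (x_0² + r²)^{n+1} as functions of r ∈ (0,∞). -/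
/-! Each step divides by `r` and differentiates. Since `r / (x₀² + r²)^(n+1)` divided by `r`
is `(x₀² + r²)^-(n+1)`, whose derivative is `-2(n+1) r / (x₀² + r²)^(n+2)`, the shape
`c r / (x₀² + r²)^(n+1)` is preserved with `c` multiplied by `-2(n+1)`. -/

theorem Dsup_succ_eq_deriv_of_eq_mul {n : ℕ} {f g : ℝ → ℝ} {r : ℝ}
    (h : ∀ s ∈ Set.Ioi (0 : ℝ), Dsup n f s = s * g s) (hr : 0 < r) :
    Dsup (n + 1) f r = deriv g r := by
  refine Filter.EventuallyEq.deriv_eq ?_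
  filter_upwards [Ioi_mem_nhds hr] with s hs
  rw [h s hs, mul_div_cancel_left₀ _ (ne_of_gt hs)]

theorem hasDerivAt_inv_const_add_sq_pow (a : ℝ) (m : ℕ) {r : ℝ} (hr : a + r ^ 2 ≠ 0) :
    HasDerivAt (fun s => ((a + s ^ 2) ^ m)⁻¹) (-(m * (a + r ^ 2) ^ (m - 1) * (2 * r)) /
      ((a + r ^ 2) ^ m) ^ 2) r := by
  have hsq : HasDerivAt (fun s : ℝ => a + s ^ 2) (2 * r) r := by
    simpa using (hasDerivAt_pow 2 r).const_add a
  exact (hsq.pow m).inv (pow_ne_zero m hr)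

/-- for every `n ≥ 0` and fixed `x₀ ∈ ℝ`,
`D^r(n){r/(x₀²+r²)} = (-1)^n 2^n n! r / (x₀²+r²)^{n+1}` on `(0,∞)`. -/
theorem Dsup_cauchy_kernel_real (n : ℕ) (x₀ : ℝ) :
    ∀ r ∈ Set.Ioi (0 : ℝ),
      Dsup n (fun s => s / (x₀ ^ 2 + s ^ 2)) r =
        (-1 : ℝ) ^ n * 2 ^ n * n.factorial * r / (x₀ ^ 2 + r ^ 2) ^ (n + 1) := by
  induction n with
  | zero => simp [Dsup]
  | succ n ih =>
    intro r hr
    set c : ℝ := (-1) ^ n * 2 ^ n * n.factorial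
    have hr₀ : x₀ ^ 2 + r ^ 2 ≠ 0 := by have : 0 < r := hr; positivity
    have hdiv : ∀ s ∈ Set.Ioi (0 : ℝ),
        Dsup n (fun s => s / (x₀ ^ 2 + s ^ 2)) s = s * (c * ((x₀ ^ 2 + s ^ 2) ^ (n + 1))⁻¹) := by
      intro s hs
      rw [ih s hs]
      ring
    rw [Dsup_succ_eq_deriv_of_eq_mul hdiv hr,
      ((hasDerivAt_inv_const_add_sq_pow _ (n + 1) hr₀).const_mul c).deriv, Nat.factorial_succ]
    push_cast
    field_simp
    ring
end

section
/- Define coefficients a_ν^{(n)} for 1 ≤ ν ≤ n by a_1^{(n)} = (-1)^{n+1}(2n-3)!!, a_n^{(n)} = 1, and a_ν^{(n+1)} = -(2n-ν) a_ν^{(n)} + a_{ν-1}^{(n)} for 2 ≤ ν ≤ n. Then for every n ≥ 1 and fixed x_0 ∈ R, D_r(n){cos(x_0 r)} = Σ_{ν=1}^n a_ν^{(n)} (x_0^ν / r^{2n-ν}) cos(x_0 r + νπ/2) as functions of r ∈ (0,∞). -/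
open scoped Nat Real

/-!
Write `T_{n,ν}(r) = x₀^ν r^{ν-2n} cos(x₀ r + νπ/2)` (`cosTerm x₀ n ν`). Since
`-sin θ = cos (θ + π/2)`, the operator `(1/r) d/dr` sends `T_{n,ν}` to
`T_{n+1,ν+1} - (2n-ν) T_{n+1,ν}`. Applying it to `∑ a_ν^{(n)} T_{n,ν}` and collecting the
coefficient of each `T_{n+1,ν}` gives exactly the recursion for `a^{(n+1)}`; at `ν = 1` this is
the identity `(2n-1)‼ = (2n-1) (2n-3)‼`.
-/

open Finset

theorem doubleFactorial_two_mul_add_one (m : ℕ) : (2 * m + 1)‼ = (2 * m + 1) * (2 * m - 1)‼ := by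
  rcases m with _ | m
  · rfl
  · rw [show 2 * (m + 1) + 1 = 2 * m + 1 + 2 by ring, Nat.doubleFactorial_add_two]; rfl

theorem sum_Icc_shift_recurrence {n : ℕ} (hn : 1 ≤ n) (p q w f : ℕ → ℝ)
    (h_first : q 1 = -w 1 * p 1) (h_last : q (n + 1) = p n)
    (h_mid : ∀ ν, 2 ≤ ν → ν ≤ n → q ν = -w ν * p ν + p (ν - 1)) :
    ∑ ν ∈ Icc 1 n, p ν * (f (ν + 1) - w ν * f ν) = ∑ ν ∈ Icc 1 (n + 1), q ν * f ν := by
  have h_shift : ∑ ν ∈ Ico 1 (n + 1), p ν * f (ν + 1) = ∑ ν ∈ Ico 2 (n + 2), p (ν - 1) * f ν := by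
    simpa using sum_Ico_add' (fun ν => p (ν - 1) * f ν) 1 (n + 1) 1
  have h_mid_sum : ∑ ν ∈ Ico 2 (n + 1), q ν * f ν =
      ∑ ν ∈ Ico 2 (n + 1), (p (ν - 1) * f ν - p ν * (w ν * f ν)) :=
    sum_congr rfl fun ν hν => by
      rw [mem_Ico] at hν
      rw [h_mid ν hν.1 (by omega)]; ring
  rw [← Ico_add_one_right_eq_Icc, ← Ico_add_one_right_eq_Icc]
  simp only [mul_sub, sum_sub_distrib, h_shift]
  rw [sum_Ico_succ_top (by omega : 2 ≤ n + 1), sum_eq_sum_Ico_succ_bot (by omega : 1 < n + 1),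
    sum_eq_sum_Ico_succ_bot (by omega : 1 < n + 1 + 1), sum_Ico_succ_top (by omega : 2 ≤ n + 1),
    h_mid_sum, sum_sub_distrib, h_first, h_last]
  simp only [one_add_one_eq_two, add_tsub_cancel_right]
  ring

theorem hasDerivAt_div_pow_mul_cos (c x₀ θ : ℝ) (k : ℕ) {r : ℝ} (hr : r ≠ 0) :
    HasDerivAt (fun s => c / s ^ k * Real.cos (x₀ * s + θ))
      (c * x₀ / r ^ k * Real.cos (x₀ * r + θ + π / 2) - k * c / r ^ (k + 1) * Real.cos (x₀ * r + θ))
      r := by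
  have h_pow : HasDerivAt (fun s => c / s ^ k) (-(k * c) / r ^ (k + 1)) r := by
    have h_fun : (fun s : ℝ => c / s ^ k) = fun s => c * s ^ (-(k : ℤ)) := by
      ext s; rw [zpow_neg, zpow_natCast, div_eq_mul_inv]
    have h_exp : -(k : ℤ) - 1 = -((k + 1 : ℕ) : ℤ) := by push_cast; ring
    rw [h_fun]
    refine ((hasDerivAt_zpow (-k) r (Or.inl hr)).const_mul c).congr_deriv ?_
    rw [h_exp, zpow_neg, zpow_natCast]
    push_cast
    ring
  have h_cos : HasDerivAt (fun s => Real.cos (x₀ * s + θ)) (-Real.sin (x₀ * r + θ) * x₀) r :=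
    (Real.hasDerivAt_cos _).comp r
      ((((hasDerivAt_id r).const_mul x₀).add_const θ).congr_deriv (mul_one x₀))
  refine (h_pow.mul h_cos).congr_deriv ?_
  rw [Real.cos_add_pi_div_two, pow_succ]
  field_simp
  ring

noncomputable def cosTerm (x₀ : ℝ) (m ν : ℕ) (r : ℝ) : ℝ :=
  x₀ ^ ν / r ^ (2 * m - ν) * Real.cos (x₀ * r + ν * π / 2)

theorem hasDerivAt_cosTerm (x₀ : ℝ) {m ν : ℕ} (hν : ν ≤ 2 * m) {r : ℝ} (hr : r ≠ 0) :
    HasDerivAt (cosTerm x₀ m ν)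
      (r * (cosTerm x₀ (m + 1) (ν + 1) r - (2 * m - ν) * cosTerm x₀ (m + 1) ν r)) r := by
  have h_exp₁ : 2 * (m + 1) - (ν + 1) = 2 * m - ν + 1 := by omega
  have h_exp₂ : 2 * (m + 1) - ν = 2 * m - ν + 1 + 1 := by omega
  refine (hasDerivAt_div_pow_mul_cos (x₀ ^ ν) x₀ (ν * π / 2) (2 * m - ν) hr).congr_deriv ?_
  simp only [cosTerm, h_exp₁, h_exp₂, Nat.cast_sub hν]
  push_cast
  rw [pow_succ r (2 * m - ν + 1), pow_succ r (2 * m - ν)]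
  field_simp
  ring_nf

noncomputable def cosSum (c : ℕ → ℝ) (x₀ : ℝ) (n : ℕ) (r : ℝ) : ℝ :=
  ∑ ν ∈ Icc 1 n, c ν * cosTerm x₀ n ν r

theorem hasDerivAt_cosSum (c : ℕ → ℝ) (x₀ : ℝ) (n : ℕ) {r : ℝ} (hr : r ≠ 0) :
    HasDerivAt (cosSum c x₀ n)
      (r * ∑ ν ∈ Icc 1 n,
        c ν * (cosTerm x₀ (n + 1) (ν + 1) r - (2 * n - ν) * cosTerm x₀ (n + 1) ν r)) r := by
  rw [mul_sum]
  refine HasDerivAt.fun_sum fun ν hν => ?_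
  rw [mul_left_comm]
  exact (hasDerivAt_cosTerm x₀ (by grind) hr).const_mul (c ν)

/-- with coefficients `a ν n` (written `a n ν`) satisfying
`a n 1 = (-1)^{n+1}(2n-3)!!`, `a n n = 1`, and
`a (n+1) ν = -(2n-ν) a n ν + a n (ν-1)` for `2 ≤ ν ≤ n`, one has, for every `n ≥ 1`,
`D_r(n){cos(x₀ r)} = ∑_{ν=1}^n a n ν (x₀^ν / r^{2n-ν}) cos(x₀ r + νπ/2)` on `(0,∞)`. -/
theorem Dr_cos (a : ℕ → ℕ → ℝ)
    (ha1 : ∀ n, 1 ≤ n → a n 1 = (-1 : ℝ) ^ (n + 1) * (2 * n - 3)‼)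
    (hann : ∀ n, 1 ≤ n → a n n = 1)
    (harec : ∀ n ν, 2 ≤ ν → ν ≤ n →
      a (n + 1) ν = -(2 * (n : ℝ) - ν) * a n ν + a n (ν - 1))
    (n : ℕ) (hn : 1 ≤ n) (x₀ : ℝ) :
    ∀ r ∈ Set.Ioi (0 : ℝ),
      Dr n (fun s => Real.cos (x₀ * s)) r =
        ∑ ν ∈ Finset.Icc 1 n,
          a n ν * (x₀ ^ ν / r ^ (2 * n - ν)) * Real.cos (x₀ * r + ν * π / 2) := by
  suffices h : ∀ r ∈ Set.Ioi (0 : ℝ), Dr n (fun s => Real.cos (x₀ * s)) r = cosSum (a n) x₀ n r by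
    simpa only [cosSum, cosTerm, mul_assoc] using h
  induction n, hn using Nat.le_induction with
  | base =>
    intro r (hr : 0 < r)
    have h_fun : cosTerm x₀ 0 0 = fun s => Real.cos (x₀ * s) := by ext s; simp [cosTerm]
    have h_deriv := hasDerivAt_cosTerm x₀ (m := 0) (ν := 0) le_rfl hr.ne'
    rw [h_fun] at h_deriv
    simp only [Dr, h_deriv.deriv, one_div, inv_mul_cancel_left₀ hr.ne']
    simp [cosSum, hann]
  | succ n hn ih =>
    intro r (hr : 0 < r)
    have h_eq : Dr n (fun s => Real.cos (x₀ * s)) =ᶠ[nhds r] cosSum (a n) x₀ n :=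
      Filter.eventuallyEq_of_mem (isOpen_Ioi.mem_nhds hr) ih
    have h_first : a (n + 1) 1 = -(2 * (n : ℝ) - (1 : ℕ)) * a n 1 := by
      obtain ⟨m, rfl⟩ : ∃ m, n = m + 1 := ⟨n - 1, by omega⟩
      rw [ha1 _ (by omega), ha1 _ (by omega), show 2 * (m + 1 + 1) - 3 = 2 * m + 1 by omega,
        doubleFactorial_two_mul_add_one, show 2 * (m + 1) - 3 = 2 * m - 1 by omega]
      push_cast
      ring
    simp only [Dr]
    rw [h_eq.deriv_eq, (hasDerivAt_cosSum (a n) x₀ n hr.ne').deriv, one_div,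
      inv_mul_cancel_left₀ hr.ne', cosSum,
      sum_Icc_shift_recurrence hn (a n) (a (n + 1)) (fun ν => 2 * (n : ℝ) - ν)
        (fun ν => cosTerm x₀ (n + 1) ν r) h_first (by rw [hann _ hn, hann _ (by omega)])
        (harec n)]
end

section
/- With the coefficients a_ν^{(n)} as above, for every n ≥ 1 and fixed x_0 ∈ R: D_r(n){sin(x_0 r)} = Σ_{ν=1}^n a_ν^{(n)} (x_0^ν / r^{2n-ν}) sin(x_0 r + νπ/2), and D^r(n){sin(x_0 r)} = Σ_{ν=0}^n a_{ν+1}^{(n+1)} (x_0^ν / r^{2n-ν}) sin(x_0 r + νπ/2), as functions of r ∈ (0,∞). -/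
open scoped Nat Real

/-! Write `T ν k r = x₀^ν r^(ν-k) sin (x₀ r + νπ/2)`. Since `sin' θ = sin (θ + π/2)`, one has
`d/dr T ν k = -(k - ν) T ν (k+1) + T (ν+1) (k+1)`, and `T ν k / r = T ν (k+1)`. So both `(1/r) d/dr`
and `d/dr (· / r)` send a combination `∑ c_ν T ν k` to a combination `∑ c'_ν T ν (k+2)`, and the
recurrence defining `a` (including `a_1` and `a_n`) is precisely the map `c ↦ c'`. Induction on `n`
concludes. -/

open Finset

lemma sum_Icc_one_eq_sum_range {M : Type*} [AddCommMonoid M] (f : ℕ → M) (n : ℕ) :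
    ∑ ν ∈ Icc 1 n, f ν = ∑ i ∈ range n, f (i + 1) := by
  rw [range_eq_Ico, sum_Ico_add', zero_add, Ico_add_one_right_eq_Icc]

/-- The term `T ν k` above; `k - ν` is truncated, so only `ν ≤ k` is meaningful. -/
noncomputable def sinTerm (x₀ : ℝ) (ν k : ℕ) (r : ℝ) : ℝ :=
  x₀ ^ ν / r ^ (k - ν) * Real.sin (x₀ * r + ν * π / 2)

section sinTerm

variable {x₀ r : ℝ} {ν k : ℕ}

lemma sin_mul_eq_sinTerm : (fun s => Real.sin (x₀ * s)) = sinTerm x₀ 0 0 := by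
  funext s
  simp [sinTerm]

lemma sinTerm_div (hν : ν ≤ k) : sinTerm x₀ ν k r / r = sinTerm x₀ ν (k + 1) r := by
  simp only [sinTerm, Nat.sub_add_comm hν, pow_succ]
  ring

lemma hasDerivAt_sinTerm (hν : ν ≤ k) (hr : r ≠ 0) :
    HasDerivAt (sinTerm x₀ ν k)
      (-((k : ℝ) - ν) * sinTerm x₀ ν (k + 1) r + sinTerm x₀ (ν + 1) (k + 1) r) r := by
  obtain ⟨m, rfl⟩ := Nat.exists_eq_add_of_le' hν
  have hsin : HasDerivAt (fun s => Real.sin (x₀ * s + ν * π / 2))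
      (Real.cos (x₀ * r + ν * π / 2) * x₀) r :=
    (((hasDerivAt_id r).const_mul x₀).add_const _).sin.congr_deriv (by simp)
  have hquot :=
    ((hasDerivAt_const r (x₀ ^ ν)).fun_div (hasDerivAt_pow m r) (pow_ne_zero m hr)).fun_mul hsin
  have hcos : Real.cos (x₀ * r + ν * π / 2) = Real.sin (x₀ * r + (ν + 1 : ℕ) * π / 2) := by
    rw [← Real.sin_add_pi_div_two]
    push_cast
    ring_nf
  have hfun : sinTerm x₀ ν (m + ν) = fun s => x₀ ^ ν / s ^ m * Real.sin (x₀ * s + ν * π / 2) :=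
    funext fun s => by rw [sinTerm, Nat.add_sub_cancel]
  rw [hfun, sinTerm, sinTerm, show m + ν + 1 - ν = m + 1 by omega,
    show m + ν + 1 - (ν + 1) = m by omega, ← hcos]
  have hpow : (m : ℝ) * r ^ (m - 1) = m * r ^ m / r := by
    rcases m with _ | m
    · simp
    · field_simp; rw [Nat.add_sub_cancel, pow_succ]
  refine hquot.congr_deriv ?_
  rw [hpow]
  push_cast
  field_simp
  ring

end sinTerm

section coefficients

variable {a : ℕ → ℕ → ℝ}

lemma coeff_succ_one (ha1 : ∀ n, 1 ≤ n → a n 1 = (-1 : ℝ) ^ (n + 1) * (2 * n - 3)‼)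
    {n : ℕ} (hn : 1 ≤ n) : a (n + 1) 1 = -(2 * (n : ℝ) - 1) * a n 1 := by
  obtain ⟨m, rfl⟩ := Nat.exists_eq_add_of_le' hn
  rw [ha1 (m + 1 + 1) (by omega), ha1 (m + 1) hn, show 2 * (m + 1 + 1) - 3 = 2 * m + 1 by omega,
    show 2 * (m + 1) - 3 = 2 * m - 1 by omega, Nat.doubleFactorial_add_one]
  push_cast
  ring

lemma sum_coeff_row_succ (ha1 : ∀ n, 1 ≤ n → a n 1 = (-1 : ℝ) ^ (n + 1) * (2 * n - 3)‼)
    (hann : ∀ n, 1 ≤ n → a n n = 1)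
    (harec : ∀ n ν, 2 ≤ ν → ν ≤ n →
      a (n + 1) ν = -(2 * (n : ℝ) - ν) * a n ν + a n (ν - 1))
    {m : ℕ} (hm : 1 ≤ m) (U : ℕ → ℝ) :
    ∑ i ∈ range m, a m (i + 1) * (-(2 * (m : ℝ) - (i + 1)) * U i + U (i + 1)) =
      ∑ i ∈ range (m + 1), a (m + 1) (i + 1) * U i := by
  obtain ⟨t, rfl⟩ := Nat.exists_eq_add_of_le' hm
  have hmid : ∀ i ∈ range t, a (t + 1 + 1) (i + 1 + 1) * U (i + 1) =
      a (t + 1) (i + 1 + 1) * (-(2 * ((t + 1 : ℕ) : ℝ) - ((i + 1 : ℕ) + 1)) * U (i + 1)) +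
        a (t + 1) (i + 1) * U (i + 1) := by
    intro i hi
    rw [harec (t + 1) (i + 2) (by omega) (by simp at hi; omega)]
    push_cast
    ring
  rw [sum_range_succ (fun i => a (t + 1 + 1) (i + 1) * U i),
    sum_range_succ' (fun i => a (t + 1 + 1) (i + 1) * U i), sum_congr rfl hmid, sum_add_distrib]
  simp only [mul_add, sum_add_distrib]
  rw [sum_range_succ', sum_range_succ (fun i => a (t + 1) (i + 1) * U (i + 1))]
  rw [coeff_succ_one ha1 hm, hann (t + 1 + 1) (by omega), hann (t + 1) hm]
  push_cast
  ring

end coefficients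

section sin

variable {a : ℕ → ℕ → ℝ}

lemma Dr_sin_eqOn (ha1 : ∀ n, 1 ≤ n → a n 1 = (-1 : ℝ) ^ (n + 1) * (2 * n - 3)‼)
    (hann : ∀ n, 1 ≤ n → a n n = 1)
    (harec : ∀ n ν, 2 ≤ ν → ν ≤ n →
      a (n + 1) ν = -(2 * (n : ℝ) - ν) * a n ν + a n (ν - 1))
    (x₀ : ℝ) {n : ℕ} (hn : 1 ≤ n) :
    Set.EqOn (Dr n fun s => Real.sin (x₀ * s))
      (fun r => ∑ i ∈ range n, a n (i + 1) * sinTerm x₀ (i + 1) (2 * n) r) (Set.Ioi 0) := by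
  induction n, hn using Nat.le_induction with
  | base =>
    intro r hr
    have hr0 : r ≠ 0 := hr.ne'
    simp only [Dr]
    rw [sin_mul_eq_sinTerm, (hasDerivAt_sinTerm le_rfl hr0).deriv, one_div_mul_eq_div,
      sum_range_one, hann 1 le_rfl]
    simp [← sinTerm_div]
  | succ n hn ih =>
    intro r hr
    have hr0 : r ≠ 0 := hr.ne'
    have hderiv := HasDerivAt.fun_sum fun i (hi : i ∈ range n) =>
      (hasDerivAt_sinTerm (x₀ := x₀) (ν := i + 1) (k := 2 * n) (by simp at hi; omega)
        hr0).const_mul (a n (i + 1))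
    calc Dr (n + 1) (fun s => Real.sin (x₀ * s)) r
        = (∑ i ∈ range n, a n (i + 1) * (-((2 * n : ℕ) - (i + 1 : ℕ) : ℝ) *
            sinTerm x₀ (i + 1) (2 * n + 1) r + sinTerm x₀ (i + 1 + 1) (2 * n + 1) r)) / r := by
          simp only [Dr]
          rw [ih.deriv isOpen_Ioi hr, hderiv.deriv, one_div_mul_eq_div]
      _ = ∑ i ∈ range n, a n (i + 1) * (-(2 * (n : ℝ) - (i + 1)) *
            sinTerm x₀ (i + 1) (2 * n + 1 + 1) r + sinTerm x₀ (i + 1 + 1) (2 * n + 1 + 1) r) := by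
          rw [sum_div]
          refine sum_congr rfl fun i hi => ?_
          rw [mem_range] at hi
          rw [mul_div_assoc, add_div, mul_div_assoc, sinTerm_div (by omega), sinTerm_div (by omega)]
          push_cast
          ring
      _ = ∑ i ∈ range (n + 1), a (n + 1) (i + 1) * sinTerm x₀ (i + 1) (2 * (n + 1)) r :=
          sum_coeff_row_succ ha1 hann harec hn _

lemma Dsup_sin_eqOn (ha1 : ∀ n, 1 ≤ n → a n 1 = (-1 : ℝ) ^ (n + 1) * (2 * n - 3)‼)
    (hann : ∀ n, 1 ≤ n → a n n = 1)
    (harec : ∀ n ν, 2 ≤ ν → ν ≤ n →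
      a (n + 1) ν = -(2 * (n : ℝ) - ν) * a n ν + a n (ν - 1))
    (x₀ : ℝ) (n : ℕ) :
    Set.EqOn (Dsup n fun s => Real.sin (x₀ * s))
      (fun r => ∑ i ∈ range (n + 1), a (n + 1) (i + 1) * sinTerm x₀ i (2 * n) r) (Set.Ioi 0) := by
  induction n with
  | zero =>
    intro r _
    simp [Dsup, sinTerm, hann 1 le_rfl]
  | succ n ih =>
    intro r hr
    have hquot : Set.EqOn (fun s => Dsup n (fun s => Real.sin (x₀ * s)) s / s)
        (fun s => ∑ i ∈ range (n + 1), a (n + 1) (i + 1) * sinTerm x₀ i (2 * n + 1) s)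
        (Set.Ioi 0) := by
      intro s hs
      simp only [ih hs, sum_div, mul_div_assoc]
      refine sum_congr rfl fun i hi => ?_
      rw [sinTerm_div (by simp at hi; omega)]
    have hderiv := HasDerivAt.fun_sum fun i (hi : i ∈ range (n + 1)) =>
      (hasDerivAt_sinTerm (x₀ := x₀) (ν := i) (k := 2 * n + 1) (by simp at hi; omega)
        hr.ne').const_mul (a (n + 1) (i + 1))
    calc Dsup (n + 1) (fun s => Real.sin (x₀ * s)) r
        = ∑ i ∈ range (n + 1), a (n + 1) (i + 1) * (-(2 * ((n + 1 : ℕ) : ℝ) - (i + 1)) *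
            sinTerm x₀ i (2 * (n + 1)) r + sinTerm x₀ (i + 1) (2 * (n + 1)) r) := by
          simp only [Dsup]
          rw [hquot.deriv isOpen_Ioi hr, hderiv.deriv, show 2 * (n + 1) = 2 * n + 1 + 1 by ring]
          refine sum_congr rfl fun i _ => ?_
          push_cast
          ring
      _ = ∑ i ∈ range (n + 1 + 1), a (n + 1 + 1) (i + 1) * sinTerm x₀ i (2 * (n + 1)) r :=
          sum_coeff_row_succ ha1 hann harec (by omega) _

end sin

/-- with the coefficients `a n ν` as in Statement 13, for every `n ≥ 1`
and fixed `x₀ ∈ ℝ`, on `(0,∞)`: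
`D_r(n){sin(x₀ r)} = ∑_{ν=1}^n a n ν (x₀^ν / r^{2n-ν}) sin(x₀ r + νπ/2)` and
`D^r(n){sin(x₀ r)} = ∑_{ν=0}^n a (n+1) (ν+1) (x₀^ν / r^{2n-ν}) sin(x₀ r + νπ/2)`. -/
theorem Dr_Dsup_sin (a : ℕ → ℕ → ℝ)
    (ha1 : ∀ n, 1 ≤ n → a n 1 = (-1 : ℝ) ^ (n + 1) * (2 * n - 3)‼)
    (hann : ∀ n, 1 ≤ n → a n n = 1)
    (harec : ∀ n ν, 2 ≤ ν → ν ≤ n →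
      a (n + 1) ν = -(2 * (n : ℝ) - ν) * a n ν + a n (ν - 1))
    (n : ℕ) (hn : 1 ≤ n) (x₀ : ℝ) :
    ∀ r ∈ Set.Ioi (0 : ℝ),
      Dr n (fun s => Real.sin (x₀ * s)) r =
        ∑ ν ∈ Finset.Icc 1 n,
          a n ν * (x₀ ^ ν / r ^ (2 * n - ν)) * Real.sin (x₀ * r + ν * π / 2) ∧
      Dsup n (fun s => Real.sin (x₀ * s)) r =
        ∑ ν ∈ Finset.range (n + 1),
          a (n + 1) (ν + 1) * (x₀ ^ ν / r ^ (2 * n - ν)) * Real.sin (x₀ * r + ν * π / 2) := by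
  intro r hr
  constructor
  · rw [Dr_sin_eqOn ha1 hann harec x₀ hn hr, sum_Icc_one_eq_sum_range]
    simp only [sinTerm, mul_assoc]
  · rw [Dsup_sin_eqOn ha1 hann harec x₀ n hr]
    simp only [sinTerm, mul_assoc]
end

section
/- Let A(x_0,r) and B(x_0,r) be real-valued C¹ functions on an open set of {(x_0,r) : r > 0}, let ω = x/|x| for the vector part x of a paravector, and let P_k be a homogeneous monogenic polynomial of degree k in R^m. Then the axial function F(x_0 + x) = (A(x_0,r) + ω B(x_0,r)) P_k(x), with r = |x|, satisfies ∂_{x_0}F + ∂_x F = 0 (left monogenicity with respect to the generalized Cauchy-Riemann operator) if and only if A and B satisfy the Vekua-type system ∂_{x_0}A - ∂_r B = ((2k+m-1)/r) B and ∂_{x_0}B + ∂_r A = 0. -/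
open scoped BigOperators

section Aux
variable {m : ℕ} {Alg : Type*} [NormedRing Alg] [NormedAlgebra ℝ Alg]

/-- The linear "vector embedding" map. -/
noncomputable def vecL (e : Fin m → Alg) : EuclideanSpace ℝ (Fin m) →L[ℝ] Alg :=
  ∑ j, (EuclideanSpace.proj j).smulRight (e j)

lemma vecL_apply (e : Fin m → Alg) (x : EuclideanSpace ℝ (Fin m)) :
    vecL e x = ∑ j, x j • e j := by
  simp [vecL, ContinuousLinearMap.sum_apply]

lemma vecL_single (e : Fin m → Alg) (j : Fin m) :
    vecL e (EuclideanSpace.single j 1) = e j := by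
  rw [vecL_apply, Finset.sum_eq_single j]
  · simp
  · intro i _ hi; rw [EuclideanSpace.single_apply, if_neg hi, zero_smul]
  · simp

lemma norm_sq_eq_sum (x : EuclideanSpace ℝ (Fin m)) : ‖x‖ ^ 2 = ∑ i, x i * x i := by
  rw [EuclideanSpace.norm_eq, Real.sq_sqrt (by positivity)]
  simp [sq]

lemma vecL_sq (e : Fin m → Alg) (he : ∀ j, e j ^ 2 = -1)
    (hanti : ∀ j k, j ≠ k → e j * e k = -(e k * e j)) (x : EuclideanSpace ℝ (Fin m)) :
    vecL e x * vecL e x = (-(‖x‖ ^ 2) : ℝ) • 1 := by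
  have hee : ∀ i : Fin m, e i * e i = -1 := by
    intro i; rw [← pow_two, he i]
  rw [vecL_apply, Finset.sum_mul_sum]
  have key : ∀ i j : Fin m, (x i • e i) * (x j • e j) = (x i * x j) • (e i * e j) := by
    intro i j; rw [smul_mul_assoc, mul_smul_comm, smul_smul]
  simp_rw [key]
  set T : Alg := ∑ i, ∑ j, (x i * x j) • (e i * e j) with hT
  have hsymm : T = ∑ i, ∑ j, (x j * x i) • (e j * e i) := by rw [hT, Finset.sum_comm]
  have hTT : T + T = ((-2) * ‖x‖ ^ 2 : ℝ) • (1 : Alg) := by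
    nth_rewrite 2 [hsymm]
    rw [← Finset.sum_add_distrib]
    simp_rw [← Finset.sum_add_distrib]
    have : ∀ i : Fin m, ∑ j, ((x i * x j) • (e i * e j) + (x j * x i) • (e j * e i))
        = ((-2) * (x i * x i)) • (1 : Alg) := by
      intro i
      rw [Finset.sum_eq_single i]
      · rw [hee i]; module
      · intro j _ hj
        rw [hanti j i hj, mul_comm (x j) (x i), smul_neg, add_neg_cancel]
      · simp
    rw [Finset.sum_congr rfl (fun i _ => this i), ← Finset.sum_smul, ← Finset.mul_sum,
      ← norm_sq_eq_sum]
  have h2 : T + T = (2 : ℝ) • T := by rw [two_smul]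
  have : (2 : ℝ) • T = ((-2) * ‖x‖ ^ 2 : ℝ) • (1 : Alg) := by rw [← h2, hTT]
  calc T = (2 : ℝ)⁻¹ • ((2 : ℝ) • T) := by rw [smul_smul]; norm_num
  _ = (2 : ℝ)⁻¹ • (((-2) * ‖x‖ ^ 2 : ℝ) • (1 : Alg)) := by rw [this]
  _ = (-(‖x‖ ^ 2) : ℝ) • 1 := by rw [smul_smul]; congr 1; ring

lemma ej_vecL_anticomm (e : Fin m → Alg) (he : ∀ j, e j ^ 2 = -1)
    (hanti : ∀ j k, j ≠ k → e j * e k = -(e k * e j)) (x : EuclideanSpace ℝ (Fin m))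
    (j : Fin m) :
    e j * vecL e x + vecL e x * e j = ((-2) * x j : ℝ) • 1 := by
  have hee : e j * e j = -1 := by rw [← pow_two, he j]
  rw [vecL_apply, Finset.mul_sum, Finset.sum_mul, ← Finset.sum_add_distrib]
  have : ∀ i : Fin m, (e j * (x i • e i) + (x i • e i) * e j)
      = (if i = j then ((-2) * x j : ℝ) • (1 : Alg) else 0) := by
    intro i
    rw [mul_smul_comm, smul_mul_assoc]
    split_ifs with h
    · subst h; rw [hee, smul_neg, ← neg_add, ← two_smul ℝ, smul_smul, ← neg_smul]
      ring_nf
    · rw [hanti j i (fun hh => h hh.symm), smul_neg, neg_add_cancel]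
  rw [Finset.sum_congr rfl (fun i _ => this i), Finset.sum_ite_eq' Finset.univ j]
  simp

end Aux

section Aux2
variable {m : ℕ} {Alg : Type*} [NormedRing Alg] [NormedAlgebra ℝ Alg]

lemma euler_identity (k : ℕ) (P : EuclideanSpace ℝ (Fin m) → Alg)
    (hP : ContDiff ℝ (⊤ : ℕ∞) P) (hPhom : ∀ (t : ℝ) (x), P (t • x) = t ^ k • P x)
    (x : EuclideanSpace ℝ (Fin m)) :
    fderiv ℝ P x x = (k : ℝ) • P x := by
  have h1 : HasDerivAt (fun t : ℝ => P (t • x)) (fderiv ℝ P x x) 1 := by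
    have hs : HasDerivAt (fun t : ℝ => t • x) x 1 := by
      simpa using (hasDerivAt_id (1:ℝ)).smul_const x
    have hP' : HasFDerivAt P (fderiv ℝ P ((1:ℝ) • x)) ((1:ℝ) • x) :=
      (hP.differentiable (by simp) ((1:ℝ) • x)).hasFDerivAt
    simpa [one_smul, Function.comp_def] using hP'.comp_hasDerivAt 1 hs
  have h2 : HasDerivAt (fun t : ℝ => t ^ k • P x) ((k : ℝ) • P x) 1 := by
    have := (hasDerivAt_pow k (1:ℝ)).smul_const (P x)
    simpa using this
  have heq : (fun t : ℝ => P (t • x)) = fun t : ℝ => t ^ k • P x := by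
    funext t; exact hPhom t x
  rw [heq] at h1
  exact h1.unique h2

lemma hasFDerivAt_norm_euc {x : EuclideanSpace ℝ (Fin m)} (hx : x ≠ 0) :
    HasFDerivAt (fun y : EuclideanSpace ℝ (Fin m) => ‖y‖)
      ((‖x‖⁻¹ : ℝ) • innerSL ℝ x) x := by
  have hsq : HasFDerivAt (fun y : EuclideanSpace ℝ (Fin m) => ‖y‖ ^ 2)
      (2 • (innerSL ℝ x)) x := by
    simpa using (hasFDerivAt_id x).norm_sq
  have hne : ‖x‖ ^ 2 ≠ 0 := pow_ne_zero 2 (norm_ne_zero_iff.mpr hx)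
  have := hsq.sqrt hne
  have heq : (fun y : EuclideanSpace ℝ (Fin m) => Real.sqrt (‖y‖ ^ 2))
      = fun y => ‖y‖ := by
    funext y; rw [Real.sqrt_sq (norm_nonneg y)]
  rw [heq] at this
  have hnorm : Real.sqrt (‖x‖ ^ 2) = ‖x‖ := Real.sqrt_sq (norm_nonneg x)
  rw [hnorm] at this
  have h2 : ‖x‖ ≠ 0 := norm_ne_zero_iff.mpr hx
  refine this.congr_fderiv ?_
  ext v
  simp only [ContinuousLinearMap.smul_apply, smul_eq_mul, two_smul, two_nsmul]
  field_simp
  rw [ContinuousLinearMap.add_apply]; ring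

lemma innerSL_single (x : EuclideanSpace ℝ (Fin m)) (j : Fin m) :
    innerSL ℝ x (EuclideanSpace.single j 1) = x j := by
  simp [innerSL_apply_apply, EuclideanSpace.inner_single_right]

end Aux2

/-- The Dirac operator on Clifford-algebra-valued functions of `x ∈ ℝ^m`. -/
noncomputable def diracE {m : ℕ} {Alg : Type*} [NormedRing Alg] [NormedAlgebra ℝ Alg]
    (e : Fin m → Alg) (f : EuclideanSpace ℝ (Fin m) → Alg)
    (x : EuclideanSpace ℝ (Fin m)) : Alg :=
  ∑ j : Fin m, e j * fderiv ℝ f x (EuclideanSpace.single j 1)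

abbrev Euc (m : ℕ) := EuclideanSpace ℝ (Fin m)

section Core
variable {m : ℕ} {Alg : Type*} [NormedRing Alg] [NormedAlgebra ℝ Alg]

set_option maxHeartbeats 1000000 in
lemma core (e : Fin m → Alg)
    (he : ∀ j, e j ^ 2 = -1)
    (hanti : ∀ j k, j ≠ k → e j * e k = -(e k * e j))
    (k : ℕ) (P : EuclideanSpace ℝ (Fin m) → Alg)
    (hPsmooth : ContDiff ℝ (⊤ : ℕ∞) P)
    (hPhom : ∀ (t : ℝ) (x), P (t • x) = t ^ k • P x)
    (hPmono : ∀ x, diracE e P x = 0)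
    (Ω : Set (ℝ × ℝ)) (hΩ : IsOpen Ω)
    (A B : ℝ × ℝ → ℝ)
    (hA : ContDiffOn ℝ 1 A Ω) (hB : ContDiffOn ℝ 1 B Ω)
    (F : ℝ × EuclideanSpace ℝ (Fin m) → Alg)
    (hF : ∀ (x₀ : ℝ) (x : EuclideanSpace ℝ (Fin m)), x ≠ 0 →
      F (x₀, x) = A (x₀, ‖x‖) • P x +
        (B (x₀, ‖x‖) / ‖x‖) • ((∑ j, x j • e j) * P x))
    (x₀ : ℝ) (x : EuclideanSpace ℝ (Fin m)) (hx : x ≠ 0) (hp : (x₀, ‖x‖) ∈ Ω) :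
    fderiv ℝ F (x₀, x) (1, 0) +
        ∑ j : Fin m, e j * fderiv ℝ F (x₀, x) (0, EuclideanSpace.single j 1) =
      (fderiv ℝ A (x₀, ‖x‖) (1, 0) - fderiv ℝ B (x₀, ‖x‖) (0, 1)
          - ((2 * k + m - 1 : ℝ) / ‖x‖) * B (x₀, ‖x‖)) • P x +
        ((fderiv ℝ B (x₀, ‖x‖) (1, 0) + fderiv ℝ A (x₀, ‖x‖) (0, 1)) / ‖x‖) •
          (vecL e x * P x) := by
  have hr : (‖x‖ : ℝ) ≠ 0 := norm_ne_zero_iff.mpr hx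
  -- continuous linear maps
  set NA := fderiv ℝ A (x₀, ‖x‖) with hNA
  set NB := fderiv ℝ B (x₀, ‖x‖) with hNB
  set dP := fderiv ℝ P x with hdP
  set n' : Euc m →L[ℝ] ℝ := (‖x‖⁻¹ : ℝ) • innerSL ℝ x with hn'
  set sndL : (ℝ × Euc m) →L[ℝ] Euc m := ContinuousLinearMap.snd ℝ ℝ (Euc m) with hsndL
  set N2 : (ℝ × Euc m) →L[ℝ] ℝ := n'.comp sndL with hN2def
  set dΦ : (ℝ × Euc m) →L[ℝ] (ℝ × ℝ) := (ContinuousLinearMap.fst ℝ ℝ (Euc m)).prod N2 with hdΦ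
  -- derivatives
  have hn : HasFDerivAt (fun y : Euc m => ‖y‖) n' x := hasFDerivAt_norm_euc hx
  have hN2 : HasFDerivAt (fun q : ℝ × Euc m => ‖q.2‖) N2 (x₀, x) :=
    hn.comp (x₀, x) hasFDerivAt_snd
  have hΦ : HasFDerivAt (fun q : ℝ × Euc m => (q.1, ‖q.2‖)) dΦ (x₀, x) :=
    hasFDerivAt_fst.prodMk hN2
  have hAp : HasFDerivAt A NA (x₀, ‖x‖) :=
    ((hA.differentiableOn one_ne_zero).differentiableAt (hΩ.mem_nhds hp)).hasFDerivAt
  have hBp : HasFDerivAt B NB (x₀, ‖x‖) :=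
    ((hB.differentiableOn one_ne_zero).differentiableAt (hΩ.mem_nhds hp)).hasFDerivAt
  have hg₁ : HasFDerivAt (fun q : ℝ × Euc m => A (q.1, ‖q.2‖)) (NA.comp dΦ) (x₀, x) :=
    hAp.comp (x₀, x) hΦ
  have hgB : HasFDerivAt (fun q : ℝ × Euc m => B (q.1, ‖q.2‖)) (NB.comp dΦ) (x₀, x) :=
    hBp.comp (x₀, x) hΦ
  have hinv : HasFDerivAt (fun q : ℝ × Euc m => (‖q.2‖)⁻¹)
      ((-(‖x‖ ^ 2)⁻¹ : ℝ) • N2) (x₀, x) :=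
    (hasDerivAt_inv hr).comp_hasFDerivAt (x₀, x) hN2
  have hg₂ : HasFDerivAt (fun q : ℝ × Euc m => B (q.1, ‖q.2‖) * (‖q.2‖)⁻¹)
      (B (x₀, ‖x‖) • ((-(‖x‖ ^ 2)⁻¹ : ℝ) • N2) + (NB.comp dΦ).smulRight (‖x‖⁻¹))
      (x₀, x) := hgB.mul' hinv
  have hP' : HasFDerivAt P dP x := (hPsmooth.differentiable (by simp) x).hasFDerivAt
  have hh₁ : HasFDerivAt (fun q : ℝ × Euc m => P q.2) (dP.comp sndL) (x₀, x) :=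
    hP'.comp (x₀, x) hasFDerivAt_snd
  have hvec : HasFDerivAt (fun q : ℝ × Euc m => vecL e q.2) ((vecL e).comp sndL) (x₀, x) :=
    ((vecL e).hasFDerivAt).comp (x₀, x) hasFDerivAt_snd
  have hh₂ : HasFDerivAt (fun q : ℝ × Euc m => vecL e q.2 * P q.2)
      (vecL e x • (dP.comp sndL) + ((vecL e).comp sndL).smulRight (P x)) (x₀, x) :=
    hvec.mul' hh₁
  have hG : HasFDerivAt
      (fun q : ℝ × Euc m => A (q.1, ‖q.2‖) • P q.2
        + (B (q.1, ‖q.2‖) * (‖q.2‖)⁻¹) • (vecL e q.2 * P q.2))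
      ((A (x₀, ‖x‖) • (dP.comp sndL) + (NA.comp dΦ).smulRight (P x))
        + ((B (x₀, ‖x‖) * ‖x‖⁻¹) •
            (vecL e x • (dP.comp sndL) + ((vecL e).comp sndL).smulRight (P x))
          + (B (x₀, ‖x‖) • ((-(‖x‖ ^ 2)⁻¹ : ℝ) • N2)
              + (NB.comp dΦ).smulRight (‖x‖⁻¹)).smulRight (vecL e x * P x)))
      (x₀, x) := (hg₁.smul hh₁).add (hg₂.smul hh₂)
  set L : (ℝ × Euc m) →L[ℝ] Alg :=
      ((A (x₀, ‖x‖) • (dP.comp sndL) + (NA.comp dΦ).smulRight (P x))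
        + ((B (x₀, ‖x‖) * ‖x‖⁻¹) •
            (vecL e x • (dP.comp sndL) + ((vecL e).comp sndL).smulRight (P x))
          + (B (x₀, ‖x‖) • ((-(‖x‖ ^ 2)⁻¹ : ℝ) • N2)
              + (NB.comp dΦ).smulRight (‖x‖⁻¹)).smulRight (vecL e x * P x))) with hLdef
  have hU : IsOpen {q : ℝ × Euc m | q.2 ≠ 0} :=
    isOpen_compl_singleton.preimage continuous_snd
  have hFG : F =ᶠ[nhds (x₀, x)] (fun q : ℝ × Euc m => A (q.1, ‖q.2‖) • P q.2
        + (B (q.1, ‖q.2‖) * (‖q.2‖)⁻¹) • (vecL e q.2 * P q.2)) := by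
    filter_upwards [hU.mem_nhds (show ((x₀, x) : ℝ × Euc m) ∈ _ from hx)] with q hq
    have h := hF q.1 q.2 hq
    rw [div_eq_mul_inv, ← vecL_apply] at h
    exact h
  have hfd : fderiv ℝ F (x₀, x) = L := hFG.fderiv_eq.trans hG.fderiv
  have hlin : ∀ (C : (ℝ × ℝ) →L[ℝ] ℝ) (t : ℝ), C (0, t) = t * C (0, 1) := by
    intro C t
    have h0 : ((0, t) : ℝ × ℝ) = t • ((0, 1) : ℝ × ℝ) := by
      simp [Prod.smul_mk]
    rw [h0, map_smul, smul_eq_mul]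
  have happ0 : fderiv ℝ F (x₀, x) (1, 0) =
      NA (1, 0) • P x + (NB (1, 0) * ‖x‖⁻¹) • (vecL e x * P x) := by
    rw [hfd, hLdef]
    simp only [ContinuousLinearMap.add_apply, ContinuousLinearMap.smul_apply,
      ContinuousLinearMap.smulRight_apply, ContinuousLinearMap.comp_apply,
      ContinuousLinearMap.prod_apply, ContinuousLinearMap.coe_fst',
      ContinuousLinearMap.coe_snd', hN2def, hdΦ, hn', hsndL]
    simp [map_zero, smul_eq_mul]
  have happj : ∀ j : Fin m, fderiv ℝ F (x₀, x) (0, EuclideanSpace.single j 1) =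
      (‖x‖⁻¹ * x j * NA (0, 1)) • P x
      + A (x₀, ‖x‖) • dP (EuclideanSpace.single j 1)
      + (B (x₀, ‖x‖) * (-(‖x‖ ^ 2)⁻¹ * (‖x‖⁻¹ * x j))
          + (‖x‖⁻¹ * x j) * NB (0, 1) * ‖x‖⁻¹) • (vecL e x * P x)
      + (B (x₀, ‖x‖) * ‖x‖⁻¹) •
          (vecL e x * dP (EuclideanSpace.single j 1) + e j * P x) := by
    intro j
    rw [hfd, hLdef]
    simp only [ContinuousLinearMap.add_apply, ContinuousLinearMap.smul_apply,
      ContinuousLinearMap.smulRight_apply, ContinuousLinearMap.comp_apply,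
      ContinuousLinearMap.prod_apply, ContinuousLinearMap.coe_fst',
      ContinuousLinearMap.coe_snd', hN2def, hdΦ, hn', hsndL]
    simp only [innerSL_single, vecL_single, smul_eq_mul]
    conv_lhs => rw [hlin NA, hlin NB]
    module
  -- abbreviations
  have hee : ∀ i : Fin m, e i * e i = -1 := fun i => by rw [← pow_two, he i]
  have hsum_single : ∑ j : Fin m, x j • EuclideanSpace.single j (1 : ℝ) = x := by
    ext i
    rw [show ((∑ j : Fin m, x j • EuclideanSpace.single j (1 : ℝ)) i)
        = ∑ j : Fin m, (x j • EuclideanSpace.single j (1 : ℝ)) i from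
      by rw [WithLp.ofLp_sum, Finset.sum_apply]]
    simp [EuclideanSpace.single_apply]
  have hdirac : ∑ j : Fin m, e j * dP (EuclideanSpace.single j 1) = 0 := by
    have := hPmono x
    rw [diracE] at this
    rw [hdP]
    exact this
  have heuler : dP x = (k : ℝ) • P x := by
    rw [hdP]; exact euler_identity k P hPsmooth hPhom x
  have hdPsum : ∑ j : Fin m, x j • dP (EuclideanSpace.single j 1) = (k : ℝ) • P x := by
    rw [← heuler]
    calc ∑ j : Fin m, x j • dP (EuclideanSpace.single j 1)
        = ∑ j : Fin m, dP (x j • EuclideanSpace.single j 1) := by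
          refine Finset.sum_congr rfl fun j _ => ?_; rw [map_smul]
      _ = dP (∑ j : Fin m, x j • EuclideanSpace.single j (1 : ℝ)) := by rw [map_sum]
      _ = dP x := by rw [hsum_single]
  set W : Alg := vecL e x * P x with hW
  set Av : ℝ := A (x₀, ‖x‖) with hAv
  set Bv : ℝ := B (x₀, ‖x‖) with hBv
  set c3 : ℝ := Bv * (-(‖x‖ ^ 2)⁻¹ * ‖x‖⁻¹) + NB (0, 1) * ‖x‖⁻¹ * ‖x‖⁻¹ with hc3
  -- the per-term expansion
  have hterm : ∀ j : Fin m, e j * fderiv ℝ F (x₀, x) (0, EuclideanSpace.single j 1)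
      = (‖x‖⁻¹ * x j * NA (0, 1)) • (e j * P x)
        + Av • (e j * dP (EuclideanSpace.single j 1))
        + (x j * c3) • (e j * W)
        + ((Bv * ‖x‖⁻¹) • (e j * (vecL e x * dP (EuclideanSpace.single j 1)))
          + (Bv * ‖x‖⁻¹) • (e j * (e j * P x))) := by
    intro j
    rw [happj j]
    simp only [mul_add, mul_smul_comm, hW, hc3]
    module
  rw [happ0, Finset.sum_congr rfl fun j _ => hterm j]
  rw [Finset.sum_add_distrib, Finset.sum_add_distrib, Finset.sum_add_distrib,
    Finset.sum_add_distrib]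
  have hS1 : ∑ j : Fin m, (‖x‖⁻¹ * x j * NA (0, 1)) • (e j * P x)
      = (‖x‖⁻¹ * NA (0, 1)) • W := by
    rw [hW, vecL_apply, Finset.sum_mul, Finset.smul_sum]
    refine Finset.sum_congr rfl fun j _ => ?_
    rw [smul_mul_assoc]
    module
  have hS2 : ∑ j : Fin m, Av • (e j * dP (EuclideanSpace.single j 1)) = 0 := by
    rw [← Finset.smul_sum, hdirac, smul_zero]
  have hS3 : ∑ j : Fin m, (x j * c3) • (e j * W) = (c3 * (-(‖x‖ ^ 2))) • P x := by
    have h1 : ∑ j : Fin m, (x j * c3) • (e j * W) = c3 • (vecL e x * W) := by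
      rw [vecL_apply, Finset.sum_mul, Finset.smul_sum]
      refine Finset.sum_congr rfl fun j _ => ?_
      rw [smul_mul_assoc]
      module
    rw [h1, hW, ← mul_assoc, vecL_sq e he hanti, smul_mul_assoc, one_mul, smul_smul]
  have hS4 : ∑ j : Fin m, (Bv * ‖x‖⁻¹) • (e j * (vecL e x * dP (EuclideanSpace.single j 1)))
      = (Bv * ‖x‖⁻¹) • (((-2 : ℝ) * k) • P x) := by
    rw [← Finset.smul_sum]
    congr 1
    have hid : ∀ j : Fin m, e j * (vecL e x * dP (EuclideanSpace.single j 1))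
        = ((-2) * x j : ℝ) • dP (EuclideanSpace.single j 1)
          - vecL e x * (e j * dP (EuclideanSpace.single j 1)) := by
      intro j
      have h := ej_vecL_anticomm e he hanti x j
      have h2 : e j * vecL e x = ((-2) * x j : ℝ) • 1 - vecL e x * e j :=
        eq_sub_of_add_eq h
      rw [← mul_assoc, h2, sub_mul, smul_mul_assoc, one_mul, mul_assoc]
    rw [Finset.sum_congr rfl fun j _ => hid j, Finset.sum_sub_distrib]
    have ha : ∑ j : Fin m, ((-2) * x j : ℝ) • dP (EuclideanSpace.single j 1)
        = ((-2 : ℝ)) • ((k : ℝ) • P x) := by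
      rw [← hdPsum, Finset.smul_sum]
      refine Finset.sum_congr rfl fun j _ => ?_
      rw [smul_smul]
    have hb : ∑ j : Fin m, vecL e x * (e j * dP (EuclideanSpace.single j 1)) = 0 := by
      rw [← Finset.mul_sum, hdirac, mul_zero]
    rw [ha, hb, sub_zero, smul_smul]
  have hS5 : ∑ j : Fin m, (Bv * ‖x‖⁻¹) • (e j * (e j * P x))
      = (Bv * ‖x‖⁻¹) • ((-(m : ℝ)) • P x) := by
    rw [← Finset.smul_sum]
    congr 1
    have hid : ∀ j : Fin m, e j * (e j * P x) = -(P x) := by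
      intro j
      rw [← mul_assoc, hee j, neg_one_mul]
    rw [Finset.sum_congr rfl fun j _ => hid j, Finset.sum_const, Finset.card_univ,
      Fintype.card_fin, neg_smul, ← Nat.cast_smul_eq_nsmul ℝ, ← neg_smul, smul_neg,
      ← neg_smul]
  rw [hS1, hS2, hS3, hS4, hS5]
  rw [hW]
  match_scalars
  · rw [hc3]
    field_simp
    ring
  · field_simp

end Core

lemma smul_cancel_aux {Alg : Type*} [NormedRing Alg] [NormedAlgebra ℝ Alg]
    {c : ℝ} {v : Alg} (h : c • v = 0) (hc : c ≠ 0) : v = 0 := by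
  have h2 := congrArg (fun z => c⁻¹ • z) h
  simpa [smul_smul, inv_mul_cancel₀ hc] using h2


/-- an axial function `F(x₀ + x) = (A(x₀,r) + ω B(x₀,r)) P_k(x)`, with
`r = |x|`, `ω = x/r`, and `P_k` a (nonzero) homogeneous monogenic polynomial of degree
`k`, is left monogenic for the generalized Cauchy-Riemann operator `∂_{x₀} + ∂_x`
if and only if `A, B` satisfy the Vekua-type system
`∂_{x₀}A - ∂_r B = ((2k+m-1)/r) B`, `∂_{x₀}B + ∂_r A = 0`. -/
theorem axial_monogenic_iff_vekua {m : ℕ} (hm : 0 < m)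
    {Alg : Type*} [NormedRing Alg] [NormedAlgebra ℝ Alg]
    (e : Fin m → Alg)
    (he : ∀ j, e j ^ 2 = -1)
    (hanti : ∀ j k, j ≠ k → e j * e k = -(e k * e j))
    (k : ℕ) (P : EuclideanSpace ℝ (Fin m) → Alg)
    (hPsmooth : ContDiff ℝ (⊤ : ℕ∞) P)
    (hPhom : ∀ (t : ℝ) (x), P (t • x) = t ^ k • P x)
    (hPmono : ∀ x, diracE e P x = 0)
    (hPne : P ≠ 0)
    (Ω : Set (ℝ × ℝ)) (hΩ : IsOpen Ω) (hΩpos : ∀ p ∈ Ω, 0 < p.2)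
    (A B : ℝ × ℝ → ℝ)
    (hA : ContDiffOn ℝ 1 A Ω) (hB : ContDiffOn ℝ 1 B Ω)
    (F : ℝ × EuclideanSpace ℝ (Fin m) → Alg)
    (hF : ∀ (x₀ : ℝ) (x : EuclideanSpace ℝ (Fin m)), x ≠ 0 →
      F (x₀, x) = A (x₀, ‖x‖) • P x +
        (B (x₀, ‖x‖) / ‖x‖) • ((∑ j, x j • e j) * P x)) :
    (∀ (x₀ : ℝ) (x : EuclideanSpace ℝ (Fin m)), x ≠ 0 → (x₀, ‖x‖) ∈ Ω →
        fderiv ℝ F (x₀, x) (1, 0) +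
          ∑ j : Fin m, e j * fderiv ℝ F (x₀, x) (0, EuclideanSpace.single j 1) = 0) ↔
    (∀ p ∈ Ω,
        fderiv ℝ A p (1, 0) - fderiv ℝ B p (0, 1) = ((2 * k + m - 1 : ℝ) / p.2) * B p ∧
        fderiv ℝ B p (1, 0) + fderiv ℝ A p (0, 1) = 0) := by
  constructor
  · intro H p hp
    have hr : 0 < p.2 := hΩpos p hp
    -- find x with ‖x‖ = p.2 and P x ≠ 0
    have hPy : ∃ y, P y ≠ 0 := by
      by_contra h; push_neg at h; exact hPne (funext h)
    obtain ⟨y, hy⟩ := hPy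
    have hxex : ∃ x : EuclideanSpace ℝ (Fin m), ‖x‖ = p.2 ∧ P x ≠ 0 := by
      by_cases hy0 : y = 0
      · have hconst : ∀ z, P z = P y := by
          intro z
          subst hy0
          by_cases hk0 : k = 0
          · have h1 := hPhom 0 z
            rw [hk0, zero_smul] at h1
            simpa using h1.symm
          · exfalso
            have h2 := hPhom 0 0
            rw [zero_smul, zero_pow hk0, zero_smul] at h2
            exact hy h2
        refine ⟨EuclideanSpace.single ⟨0, hm⟩ p.2, ?_, ?_⟩
        · rw [EuclideanSpace.norm_single, Real.norm_eq_abs, abs_of_pos hr]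
        · rw [hconst _]; exact hy
      · refine ⟨(p.2 / ‖y‖) • y, ?_, ?_⟩
        · rw [norm_smul, Real.norm_eq_abs, abs_of_pos
            (div_pos hr (norm_pos_iff.mpr hy0)), div_mul_cancel₀ _ (norm_ne_zero_iff.mpr hy0)]
        · rw [hPhom]
          exact smul_ne_zero (pow_ne_zero k (ne_of_gt (div_pos hr (norm_pos_iff.mpr hy0)))) hy
    obtain ⟨x, hxn, hPx⟩ := hxex
    have hx0 : x ≠ 0 := by
      intro h; rw [h, norm_zero] at hxn; exact (ne_of_gt hr) hxn.symm
    have hrx : (‖x‖ : ℝ) ≠ 0 := norm_ne_zero_iff.mpr hx0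
    have hpp : ((p.1, ‖x‖) : ℝ × ℝ) = p := by rw [hxn]
    set a0 := fderiv ℝ A p (1, 0) with ha0
    set ar := fderiv ℝ A p (0, 1) with har
    set b0 := fderiv ℝ B p (1, 0) with hb0
    set br := fderiv ℝ B p (0, 1) with hbr
    set α : ℝ := a0 - br - ((2 * k + m - 1 : ℝ) / ‖x‖) * B p with hα
    set β : ℝ := (b0 + ar) / ‖x‖ with hβ
    have h1 : α • P x + β • (vecL e x * P x) = 0 := by
      have hc := core e he hanti k P hPsmooth hPhom hPmono Ω hΩ A B hA hB F hF p.1 x hx0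
        (by rw [hpp]; exact hp)
      rw [hpp] at hc
      rw [← hc]
      exact H p.1 x hx0 (by rw [hpp]; exact hp)
    have h2 : α • P x - β • (vecL e x * P x) = 0 := by
      have hnx0 : (-x : EuclideanSpace ℝ (Fin m)) ≠ 0 := neg_ne_zero.mpr hx0
      have hc := core e he hanti k P hPsmooth hPhom hPmono Ω hΩ A B hA hB F hF p.1 (-x)
        hnx0 (by rw [norm_neg, hpp]; exact hp)
      rw [norm_neg, hpp] at hc
      have hz := H p.1 (-x) hnx0 (by rw [norm_neg, hpp]; exact hp)
      rw [hc] at hz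
      have hPneg : P (-x) = ((-1 : ℝ)) ^ k • P x := by
        rw [← hPhom (-1) x, neg_one_smul]
      have hvneg : vecL e (-x) = -(vecL e x) := map_neg _ x
      rw [hPneg, hvneg] at hz
      have hz2 : ((-1 : ℝ)) ^ k • (α • P x - β • (vecL e x * P x)) = 0 := by
        rw [← hz]
        simp only [neg_mul, mul_smul_comm, smul_neg]
        module
      exact smul_cancel_aux hz2 (pow_ne_zero k (by norm_num))
    have h3 : (2 * α) • P x = 0 := by
      have h4 : (α • P x + β • (vecL e x * P x)) + (α • P x - β • (vecL e x * P x)) = 0 := by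
        rw [h1, h2, add_zero]
      rw [← h4]; module
    have hα0 : α = 0 := by
      by_contra hh
      exact hPx (smul_cancel_aux h3 (mul_ne_zero two_ne_zero hh))
    have h5 : β • (vecL e x * P x) = 0 := by
      rw [hα0, zero_smul, zero_add] at h1; exact h1
    have hWne : vecL e x * P x ≠ 0 := by
      intro hW0
      have h6 : vecL e x * (vecL e x * P x) = 0 := by rw [hW0, mul_zero]
      rw [← mul_assoc, vecL_sq e he hanti, smul_mul_assoc, one_mul] at h6
      exact hPx (smul_cancel_aux h6 (neg_ne_zero.mpr (pow_ne_zero 2 hrx)))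
    have hβ0 : β = 0 := by
      by_contra hh
      exact hWne (smul_cancel_aux h5 hh)
    constructor
    · rw [hβ] at hβ0
      rw [hα, hxn] at hα0
      linarith [hα0]
    · rw [hβ, div_eq_zero_iff] at hβ0
      rcases hβ0 with h | h
      · exact h
      · exact absurd h hrx
  · intro H x₀ x hx0 hq
    rw [core e he hanti k P hPsmooth hPhom hPmono Ω hΩ A B hA hB F hF x₀ x hx0 hq]
    obtain ⟨h1, h2⟩ := H (x₀, ‖x‖) hq
    have hc1 : fderiv ℝ A (x₀, ‖x‖) (1, 0) - fderiv ℝ B (x₀, ‖x‖) (0, 1)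
        - ((2 * k + m - 1 : ℝ) / ‖x‖) * B (x₀, ‖x‖) = 0 := by
      rw [h1]; ring
    rw [hc1, h2, zero_smul, zero_div, zero_smul, add_zero]
end
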